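/- arXiv:1312.2687 — 3 statements merged into one kernel-verified Lean document; each statement's English description precedes it below -/
import Mathlib

section
/- Let K be an n×n real symmetric positive definite matrix with eigenvalues λ_1 ≥ ... ≥ λ_n > 0 and condition number κ = λ_1/λ_n. Then for any symmetric n×n real matrices K_1,...,K_p, writing W^i = K^{-1}K_i, for all real v_1,...,v_p: Σ_{i,j} v_i v_j tr(W^i (W^j)') ≤ (κ²+1)/(2κ) · Σ_{i,j} v_i v_j tr(W^i W^j). -/
open Matrix BigOperators


lemma aux_scalar (m M x y : ℝ) (hm : 0 < m) (hx1 : m ≤ x) (hx2 : x ≤ M)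
    (hy1 : m ≤ y) (hy2 : y ≤ M) :
    x⁻¹ ^ 2 + y⁻¹ ^ 2 ≤ ((M / m) ^ 2 + 1) / (M / m) * (x⁻¹ * y⁻¹) := by
  have hx : 0 < x := lt_of_lt_of_le hm hx1
  have hy : 0 < y := lt_of_lt_of_le hm hy1
  have hM : 0 < M := lt_of_lt_of_le hx hx2
  have h1 : m * y ≤ M * x := by nlinarith
  have h2 : m * x ≤ M * y := by nlinarith
  have key : m * M * (x ^ 2 + y ^ 2) ≤ (M ^ 2 + m ^ 2) * (x * y) := by
    nlinarith [mul_nonneg (sub_nonneg.2 h1) (sub_nonneg.2 h2)]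
  have hrw : ((M / m) ^ 2 + 1) / (M / m) = (M ^ 2 + m ^ 2) / (m * M) := by
    field_simp
  rw [hrw, div_mul_eq_mul_div, le_div_iff₀ (by positivity)]
  have e1 : (x⁻¹ ^ 2 + y⁻¹ ^ 2) * (m * M) * (x ^ 2 * y ^ 2) = m * M * (y ^ 2 + x ^ 2) := by
    field_simp
  have e2 : ((M ^ 2 + m ^ 2) * (x⁻¹ * y⁻¹)) * (x ^ 2 * y ^ 2) = (M ^ 2 + m ^ 2) * (x * y) := by
    field_simp
  have hxy : 0 < x ^ 2 * y ^ 2 := by positivity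
  rw [← mul_le_mul_iff_of_pos_right hxy, e1, e2]
  linarith [key]

lemma trace_sum_sum {n : Type*} [Fintype n] {p : ℕ} (X Y : Fin p → Matrix n n ℝ) (v : Fin p → ℝ) :
    ∑ i, ∑ j, v i * v j * (X i * Y j).trace
      = ((∑ i, v i • X i) * (∑ j, v j • Y j)).trace := by
  simp only [Finset.sum_mul, Finset.mul_sum, trace_sum, smul_mul_assoc, mul_smul_comm,
    smul_smul, trace_smul, smul_eq_mul]
  conv_rhs => rw [Finset.sum_comm]
  refine Finset.sum_congr rfl fun i _ => Finset.sum_congr rfl fun j _ => by ring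

lemma trace_mul_transpose_self' {n : Type*} [Fintype n] (M : Matrix n n ℝ) :
    (M * Mᵀ).trace = ∑ i, ∑ j, M i j ^ 2 := by
  simp [Matrix.trace, Matrix.diag, Matrix.mul_apply, sq]

lemma trace_diag_mul {n : Type*} [Fintype n] [DecidableEq n] (d : n → ℝ) (B : Matrix n n ℝ) :
    (diagonal d * B * (diagonal d * B)).trace = ∑ i, ∑ j, d i * d j * (B i j * B j i) := by
  simp only [Matrix.trace, Matrix.diag, Matrix.mul_apply, Matrix.diagonal_mul, Matrix.of_apply]
  refine Finset.sum_congr rfl fun i _ => Finset.sum_congr rfl fun j _ => by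
    simp [Matrix.diagonal_apply, ite_mul, Finset.sum_ite_eq]; ring

/-- Core inequality for a single symmetric matrix. -/
lemma core_ineq {n : ℕ} [NeZero n] (K : Matrix (Fin n) (Fin n) ℝ) (hK : K.PosDef)
    (A : Matrix (Fin n) (Fin n) ℝ) (hA : Aᵀ = A) (κ : ℝ)
    (hκ : κ = (⨆ i, hK.1.eigenvalues i) / (⨅ i, hK.1.eigenvalues i)) :
    ((K⁻¹ * A) * (K⁻¹ * A)ᵀ).trace ≤ (κ ^ 2 + 1) / (2 * κ) * ((K⁻¹ * A) * (K⁻¹ * A)).trace := by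
  classical
  set lam : Fin n → ℝ := hK.1.eigenvalues with hlam
  set U : Matrix (Fin n) (Fin n) ℝ := (hK.1.eigenvectorUnitary : Matrix (Fin n) (Fin n) ℝ) with hUdef
  have hstar : star U = Uᵀ := by simp [Matrix.star_eq_conjTranspose]
  have hU1 : Uᵀ * U = 1 := by
    rw [← hstar]; exact (Matrix.mem_unitaryGroup_iff').mp hK.1.eigenvectorUnitary.2
  have hU2 : U * Uᵀ = 1 := by
    rw [← hstar]; exact (Matrix.mem_unitaryGroup_iff).mp hK.1.eigenvectorUnitary.2
  have hpos : ∀ i, 0 < lam i := fun i => hK.eigenvalues_pos i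
  set d : Fin n → ℝ := fun i => (lam i)⁻¹ with hd
  have hspec : K = U * diagonal lam * Uᵀ := by
    have h := hK.1.spectral_theorem
    have h2 : (RCLike.ofReal ∘ hK.1.eigenvalues : Fin n → ℝ) = lam := by funext i; simp [hlam]
    rw [h2] at h
    rw [← hstar]; exact h
  have hDD : diagonal lam * diagonal d = 1 := by
    rw [diagonal_mul_diagonal]
    have : (fun i => lam i * d i) = fun _ : Fin n => (1 : ℝ) := by
      funext i; exact mul_inv_cancel₀ (hpos i).ne'
    rw [this, diagonal_one]
  have hinv : K⁻¹ = U * diagonal d * Uᵀ := by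
    apply Matrix.inv_eq_right_inv
    rw [hspec]
    have : (U * diagonal lam * Uᵀ) * (U * diagonal d * Uᵀ)
        = U * (diagonal lam * (Uᵀ * U) * diagonal d) * Uᵀ := by
      simp only [Matrix.mul_assoc]
    rw [this, hU1, Matrix.mul_one, hDD, Matrix.mul_one, hU2]
  set B : Matrix (Fin n) (Fin n) ℝ := Uᵀ * A * U with hBdef
  have hBsymm : ∀ i j, B j i = B i j := by
    intro i j
    have : Bᵀ = B := by
      rw [hBdef, Matrix.transpose_mul, Matrix.transpose_mul, Matrix.transpose_transpose, hA,
        Matrix.mul_assoc]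
    conv_lhs => rw [← this]
    rfl
  have hW : K⁻¹ * A = U * (diagonal d * B) * Uᵀ := by
    rw [hinv, hBdef]
    have : U * (diagonal d * (Uᵀ * A * U)) * Uᵀ
        = U * diagonal d * Uᵀ * A * (U * Uᵀ) := by simp only [Matrix.mul_assoc]
    rw [this, hU2, Matrix.mul_one]
  -- traces
  have htr1 : ((K⁻¹ * A) * (K⁻¹ * A)ᵀ).trace = ∑ i, ∑ j, (d i * B i j) ^ 2 := by
    rw [hW]
    have ht : (U * (diagonal d * B) * Uᵀ)ᵀ = U * (diagonal d * B)ᵀ * Uᵀ := by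
      simp [Matrix.transpose_mul, Matrix.mul_assoc]
    rw [ht]
    have : (U * (diagonal d * B) * Uᵀ) * (U * (diagonal d * B)ᵀ * Uᵀ)
        = U * ((diagonal d * B) * (Uᵀ * U) * (diagonal d * B)ᵀ) * Uᵀ := by
      simp only [Matrix.mul_assoc]
    rw [this, hU1, Matrix.mul_one, Matrix.trace_mul_cycle, ← Matrix.mul_assoc, hU1,
      Matrix.one_mul, trace_mul_transpose_self']
    refine Finset.sum_congr rfl fun i _ => Finset.sum_congr rfl fun j _ => by
      rw [Matrix.diagonal_mul]
  have htr2 : ((K⁻¹ * A) * (K⁻¹ * A)).trace = ∑ i, ∑ j, d i * d j * (B i j * B j i) := by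
    rw [hW]
    have : (U * (diagonal d * B) * Uᵀ) * (U * (diagonal d * B) * Uᵀ)
        = U * ((diagonal d * B) * (Uᵀ * U) * (diagonal d * B)) * Uᵀ := by
      simp only [Matrix.mul_assoc]
    rw [this, hU1, Matrix.mul_one, Matrix.trace_mul_cycle, ← Matrix.mul_assoc, hU1,
      Matrix.one_mul, trace_diag_mul]
  rw [htr1, htr2]
  -- bounds on eigenvalues
  set m : ℝ := ⨅ i, lam i with hm
  set M : ℝ := ⨆ i, lam i with hM
  have hle1 : ∀ i, m ≤ lam i := fun i => ciInf_le (Finite.bddBelow_range _) i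
  have hle2 : ∀ i, lam i ≤ M := fun i => le_ciSup (Finite.bddAbove_range _) i
  have hm0 : 0 < m := by
    obtain ⟨i0, hi0⟩ := Finite.exists_min lam
    exact lt_of_lt_of_le (hpos i0) (le_ciInf hi0)
  have hκMm : κ = M / m := hκ
  -- symmetrize
  have hsym : ∑ i, ∑ j, (d i * B i j) ^ 2 = ∑ i, ∑ j, (d j * B i j) ^ 2 := by
    rw [Finset.sum_comm]
    refine Finset.sum_congr rfl fun i _ => Finset.sum_congr rfl fun j _ => by
      rw [hBsymm i j]
  have key : ∀ i j, (d i * B i j) ^ 2 + (d j * B i j) ^ 2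
      ≤ ((κ ^ 2 + 1) / κ) * (d i * d j * (B i j * B j i)) := by
    intro i j
    have h := aux_scalar m M (lam i) (lam j) hm0 (hle1 i) (hle2 i) (hle1 j) (hle2 j)
    rw [← hκMm] at h
    have hb : (0 : ℝ) ≤ B i j ^ 2 := sq_nonneg _
    have := mul_le_mul_of_nonneg_right h hb
    calc (d i * B i j) ^ 2 + (d j * B i j) ^ 2
        = ((lam i)⁻¹ ^ 2 + (lam j)⁻¹ ^ 2) * B i j ^ 2 := by rw [hd]; ring
      _ ≤ (κ ^ 2 + 1) / κ * ((lam i)⁻¹ * (lam j)⁻¹) * B i j ^ 2 := this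
      _ = ((κ ^ 2 + 1) / κ) * (d i * d j * (B i j * B j i)) := by
          rw [hd, hBsymm i j]; ring
  have sum_key : ∑ i, ∑ j, ((d i * B i j) ^ 2 + (d j * B i j) ^ 2)
      ≤ ∑ i, ∑ j, ((κ ^ 2 + 1) / κ) * (d i * d j * (B i j * B j i)) :=
    Finset.sum_le_sum fun i _ => Finset.sum_le_sum fun j _ => key i j
  have hfinal : 2 * ∑ i, ∑ j, (d i * B i j) ^ 2
      ≤ ((κ ^ 2 + 1) / κ) * ∑ i, ∑ j, d i * d j * (B i j * B j i) := by
    calc 2 * ∑ i, ∑ j, (d i * B i j) ^ 2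
        = ∑ i, ∑ j, (d i * B i j) ^ 2 + ∑ i, ∑ j, (d j * B i j) ^ 2 := by
          rw [← hsym]; ring
      _ = ∑ i, ∑ j, ((d i * B i j) ^ 2 + (d j * B i j) ^ 2) := by
          rw [← Finset.sum_add_distrib]
          exact Finset.sum_congr rfl fun i _ => by rw [← Finset.sum_add_distrib]
      _ ≤ ∑ i, ∑ j, ((κ ^ 2 + 1) / κ) * (d i * d j * (B i j * B j i)) := sum_key
      _ = ((κ ^ 2 + 1) / κ) * ∑ i, ∑ j, d i * d j * (B i j * B j i) := by
          rw [Finset.mul_sum]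
          exact Finset.sum_congr rfl fun i _ => by rw [Finset.mul_sum]
  have h2 : (κ ^ 2 + 1) / (2 * κ) * ∑ i, ∑ j, d i * d j * (B i j * B j i)
      = (1 / 2) * (((κ ^ 2 + 1) / κ) * ∑ i, ∑ j, d i * d j * (B i j * B j i)) := by
    ring
  rw [h2]
  linarith [hfinal]

/-- Key inequality of Theorem 1: for `K` symmetric positive definite with condition
number `κ` and symmetric `K_1, …, K_p`, with `W^i = K⁻¹K_i`, for all real `v`:
`∑_{i,j} v_i v_j tr(W^i (W^j)') ≤ ((κ²+1)/(2κ)) ∑_{i,j} v_i v_j tr(W^i W^j)`. -/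
theorem trace_ratio_bound {n p : ℕ} [NeZero n]
    (K : Matrix (Fin n) (Fin n) ℝ) (hK : K.PosDef)
    (Ki : Fin p → Matrix (Fin n) (Fin n) ℝ) (hKi : ∀ i, (Ki i).IsSymm)
    (κ : ℝ) (hκ : κ = (⨆ i, hK.1.eigenvalues i) / (⨅ i, hK.1.eigenvalues i))
    (v : Fin p → ℝ) :
    ∑ i, ∑ j, v i * v j * ((K⁻¹ * Ki i) * (K⁻¹ * Ki j)ᵀ).trace
      ≤ (κ ^ 2 + 1) / (2 * κ)
        * ∑ i, ∑ j, v i * v j * ((K⁻¹ * Ki i) * (K⁻¹ * Ki j)).trace := by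
  classical
  set A : Matrix (Fin n) (Fin n) ℝ := ∑ k, v k • Ki k with hAdef
  have hAsymm : Aᵀ = A := by
    rw [hAdef, Matrix.transpose_sum]
    exact Finset.sum_congr rfl fun k _ => by rw [Matrix.transpose_smul, (hKi k).eq]
  have hsum : ∑ k, v k • (K⁻¹ * Ki k) = K⁻¹ * A := by
    rw [hAdef, Matrix.mul_sum]
    exact Finset.sum_congr rfl fun k _ => (Matrix.mul_smul _ _ _).symm
  have hsumT : ∑ k, v k • (K⁻¹ * Ki k)ᵀ = (K⁻¹ * A)ᵀ := by
    rw [← hsum, Matrix.transpose_sum]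
    exact Finset.sum_congr rfl fun k _ => by rw [Matrix.transpose_smul]
  have hL : ∑ i, ∑ j, v i * v j * ((K⁻¹ * Ki i) * (K⁻¹ * Ki j)ᵀ).trace
      = ((K⁻¹ * A) * (K⁻¹ * A)ᵀ).trace := by
    rw [trace_sum_sum (fun i => K⁻¹ * Ki i) (fun j => (K⁻¹ * Ki j)ᵀ) v, hsum, hsumT]
  have hR : ∑ i, ∑ j, v i * v j * ((K⁻¹ * Ki i) * (K⁻¹ * Ki j)).trace
      = ((K⁻¹ * A) * (K⁻¹ * A)).trace := by
    rw [trace_sum_sum (fun i => K⁻¹ * Ki i) (fun j => K⁻¹ * Ki j) v, hsum]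
  rw [hL, hR]
  exact core_ineq K hK A hAsymm κ hκ
end

section
/- With the dependent design U_j of the previous statement, if M is block diagonal with m diagonal blocks each of size N×N, then (1/N)Σ_{j=1}^N U_j'MU_j = tr(M) with probability 1 (the estimator has zero variance). -/
open Matrix BigOperators

def quadForm {n : ℕ} (M : Matrix (Fin n) (Fin n) ℝ) (u : Fin n → ℝ) : ℝ :=
  dotProduct u (M.mulVec u)

/-- The dependent design vector: block `t.divNat`, within-block position `t.modNat`. -/
def depDesign {m N : ℕ} (x : Fin m → Fin N → ℝ) (y : Fin N → Fin m → ℝ)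
    (β : Fin N → Fin N → ℝ) (j : Fin N) : Fin (m * N) → ℝ :=
  fun t => y j t.divNat * x t.divNat t.modNat * β j t.modNat

lemma divmod_inj {m N : ℕ} {s t : Fin (m * N)} (h1 : s.divNat = t.divNat)
    (h2 : s.modNat = t.modNat) : s = t := by
  have := finProdFinEquiv (m := m) (n := N) |>.symm.injective
    (a₁ := s) (a₂ := t) (by simp [finProdFinEquiv, h1, h2])
  exact this

/-- If `M` is block diagonal (with `m` diagonal blocks of size `N×N`), then for
every realization of the signs (hence with probability one),
`(1/N)∑_j U_j'MU_j = tr(M)`: the dependent-design estimator has zero variance. -/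
theorem dependent_design_exact_blockdiag {m N : ℕ} (hN : 0 < N)
    (x : Fin m → Fin N → ℝ) (hx : ∀ k a, x k a = 1 ∨ x k a = -1)
    (y : Fin N → Fin m → ℝ) (hy : ∀ j k, y j k = 1 ∨ y j k = -1)
    (β : Fin N → Fin N → ℝ) (hβ : ∀ j a, β j a = 1 ∨ β j a = -1)
    (hβorth : (N : ℝ)⁻¹ • ∑ j, Matrix.vecMulVec (β j) (β j) = 1)
    (M : Matrix (Fin (m * N)) (Fin (m * N)) ℝ)
    (hM : ∀ s t : Fin (m * N), s.divNat ≠ t.divNat → M s t = 0) :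
    (N : ℝ)⁻¹ * ∑ j, quadForm M (depDesign x y β j) = M.trace := by
  have hx2 : ∀ k a, x k a * x k a = 1 := fun k a => by rcases hx k a with h|h <;> simp [h]
  have hy2 : ∀ j k, y j k * y j k = 1 := fun j k => by rcases hy j k with h|h <;> simp [h]
  have hβo : ∀ a b : Fin N, (N : ℝ)⁻¹ * ∑ j, β j a * β j b = if a = b then 1 else 0 := by
    intro a b
    have := congrFun (congrFun hβorth a) b
    simpa [Matrix.smul_apply, Matrix.sum_apply, Matrix.vecMulVec_apply,
      Matrix.one_apply] using this
  have key : ∀ j, quadForm M (depDesign x y β j)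
      = ∑ s, ∑ t, M s t * (depDesign x y β j s * depDesign x y β j t) := by
    intro j
    simp only [quadForm, dotProduct, Matrix.mulVec, dotProduct,
      Finset.mul_sum]
    exact Finset.sum_congr rfl fun s _ => Finset.sum_congr rfl fun t _ => by ring
  simp only [key]
  rw [Finset.sum_comm, Finset.mul_sum]
  rw [Matrix.trace]
  refine Finset.sum_congr rfl fun s _ => ?_
  rw [Finset.sum_comm, Finset.mul_sum]
  have : ∀ t, (N : ℝ)⁻¹ * ∑ j, M s t * (depDesign x y β j s * depDesign x y β j t)
      = if t = s then M s s else 0 := by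
    intro t
    by_cases hk : s.divNat = t.divNat
    · have : ∀ j, M s t * (depDesign x y β j s * depDesign x y β j t)
          = M s t * (x s.divNat s.modNat * x t.divNat t.modNat)
            * (β j s.modNat * β j t.modNat) := by
        intro j
        simp only [depDesign, ← hk]
        linear_combination (M s t * x s.divNat s.modNat * β j s.modNat *
          x s.divNat t.modNat * β j t.modNat) * hy2 j s.divNat
      simp only [this, ← Finset.mul_sum]
      rw [show (N:ℝ)⁻¹ * (M s t * (x s.divNat s.modNat * x t.divNat t.modNat)
          * ∑ j, β j s.modNat * β j t.modNat)
        = M s t * (x s.divNat s.modNat * x t.divNat t.modNat)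
          * ((N:ℝ)⁻¹ * ∑ j, β j s.modNat * β j t.modNat) by ring, hβo]
      by_cases ha : s.modNat = t.modNat
      · have hst : s = t := divmod_inj hk ha
        simp [hst, ha, hx2]
      · have hst : t ≠ s := fun h => ha (by rw [h])
        simp [ha, hst]
    · have hst : t ≠ s := fun h => hk (by rw [h])
      simp [hM s t hk, hst]
  rw [Finset.sum_congr rfl fun t _ => this t]
  simp
end

section
/- In the dependent design, for indices (k,a) ≠ (ℓ,b) as block/position pairs with k ≠ ℓ, the pair of products (U_{i,(k-1)N+a}U_{i,(ℓ-1)N+b}, U_{j,(k'-1)N+a'}U_{j,(ℓ'-1)N+b'}) has the same joint distribution as under independent sampling: the two components are independent symmetric Bernoulli unless (i=j, a=a', b=b', k=k'≠ℓ=ℓ') or (i=j, a=b', b=a', k=ℓ'≠ℓ=k'), in which case they are equal almost surely. -/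
open MeasureTheory ProbabilityTheory Matrix BigOperators

def IsSymmBernoulli {Ω : Type*} [MeasurableSpace Ω] (μ : Measure Ω) (X : Ω → ℝ) : Prop :=
  μ (X ⁻¹' {1}) = 1/2 ∧ μ (X ⁻¹' {-1}) = 1/2

section Aux

variable {Ω : Type*} [MeasurableSpace Ω] {ν : Measure Ω}

lemma IsSymmBernoulli.union_eq_one [IsProbabilityMeasure ν] {ε : Ω → ℝ}
    (hb : IsSymmBernoulli ν ε) (hm : Measurable ε) :
    ν (ε ⁻¹' {1} ∪ ε ⁻¹' {-1}) = 1 := by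
  have hdis : Disjoint (ε ⁻¹' {1}) (ε ⁻¹' {-1}) := by
    apply Set.disjoint_left.2
    intro ω h1 h2
    simp only [Set.mem_preimage, Set.mem_singleton_iff] at h1 h2
    norm_num [h1] at h2
  rw [measure_union hdis (hm (measurableSet_singleton _)), hb.1, hb.2, ENNReal.add_halves]

lemma IsSymmBernoulli.compl_null [IsProbabilityMeasure ν] {ε : Ω → ℝ}
    (hb : IsSymmBernoulli ν ε) (hm : Measurable ε) :
    ν ((ε ⁻¹' {1} ∪ ε ⁻¹' {-1})ᶜ) = 0 := by
  rw [prob_compl_eq_zero_iff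
    ((hm (measurableSet_singleton _)).union (hm (measurableSet_singleton _)))]
  exact hb.union_eq_one hm

lemma pm_set_eq (S : Ω → ℝ) : {ω | ¬ (S ω = 1 ∨ S ω = -1)} = (S ⁻¹' {1} ∪ S ⁻¹' {-1})ᶜ := by
  ext ω
  simp [not_or]

lemma IsSymmBernoulli.ae_pm_one [IsProbabilityMeasure ν] {ε : Ω → ℝ}
    (hb : IsSymmBernoulli ν ε) (hm : Measurable ε) :
    ∀ᵐ ω ∂ν, ε ω = 1 ∨ ε ω = -1 := by
  rw [ae_iff, pm_set_eq]
  exact hb.compl_null hm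

lemma compl_null_of_ae_pm_one {S : Ω → ℝ} (h : ∀ᵐ ω ∂ν, S ω = 1 ∨ S ω = -1) :
    ν ((S ⁻¹' {1} ∪ S ⁻¹' {-1})ᶜ) = 0 := by
  rw [← pm_set_eq]
  exact ae_iff.1 h

lemma measure_eq_add_inter {A B E : Set Ω} (hE : MeasurableSet E) (hB : MeasurableSet B)
    (hAB : Disjoint A B) (h : ν ((A ∪ B)ᶜ) = 0) :
    ν E = ν (E ∩ A) + ν (E ∩ B) := by
  have h1 : ν E = ν (E ∩ (A ∪ B)) := (measure_inter_conull h).symm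
  rw [h1, Set.inter_union_distrib_left,
    measure_union (hAB.mono Set.inter_subset_right Set.inter_subset_right) (hE.inter hB)]

lemma pm_disjoint {S : Ω → ℝ} : Disjoint (S ⁻¹' {1}) (S ⁻¹' {-1}) := by
  apply Set.disjoint_left.2
  intro ω h1 h2
  simp only [Set.mem_preimage, Set.mem_singleton_iff] at h1 h2
  norm_num [h1] at h2

/-- A product of a symmetric Bernoulli variable with an independent ±1 variable is
symmetric Bernoulli. -/
lemma preimage_mul_inter_one {ε S : Ω → ℝ} (x : ℝ) :
    (fun ω => ε ω * S ω) ⁻¹' {x} ∩ S ⁻¹' {1} = ε ⁻¹' {x} ∩ S ⁻¹' {1} := by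
  ext ω
  simp only [Set.mem_inter_iff, Set.mem_preimage, Set.mem_singleton_iff]
  constructor
  · rintro ⟨h1, h2⟩
    rw [h2, mul_one] at h1
    exact ⟨h1, h2⟩
  · rintro ⟨h1, h2⟩
    rw [h1, h2, mul_one]
    exact ⟨rfl, rfl⟩

lemma preimage_mul_inter_neg_one {ε S : Ω → ℝ} (x : ℝ) :
    (fun ω => ε ω * S ω) ⁻¹' {x} ∩ S ⁻¹' {-1} = ε ⁻¹' {-x} ∩ S ⁻¹' {-1} := by
  ext ω
  simp only [Set.mem_inter_iff, Set.mem_preimage, Set.mem_singleton_iff]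
  constructor
  · rintro ⟨h1, h2⟩
    rw [h2] at h1
    exact ⟨by linarith, h2⟩
  · rintro ⟨h1, h2⟩
    rw [h1, h2]
    exact ⟨by ring, rfl⟩

/-- A product of a symmetric Bernoulli variable with an independent ±1 variable is
symmetric Bernoulli. -/
lemma isSymmBernoulli_mul [IsProbabilityMeasure ν] {ε S : Ω → ℝ}
    (hεm : Measurable ε) (hSm : Measurable S)
    (hε : IsSymmBernoulli ν ε) (hS : ∀ᵐ ω ∂ν, S ω = 1 ∨ S ω = -1)
    (hind : IndepFun ε S ν) :
    IsSymmBernoulli ν (fun ω => ε ω * S ω) := by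
  have hZm : Measurable fun ω => ε ω * S ω := hεm.mul hSm
  have hB1 : MeasurableSet (S ⁻¹' {1}) := hSm (measurableSet_singleton _)
  have hB2 : MeasurableSet (S ⁻¹' {-1}) := hSm (measurableSet_singleton _)
  have hcompl : ν ((S ⁻¹' {1} ∪ S ⁻¹' {-1})ᶜ) = 0 := compl_null_of_ae_pm_one hS
  have hsum : ν (S ⁻¹' {1}) + ν (S ⁻¹' {-1}) = 1 := by
    rw [← measure_union pm_disjoint hB2, ← prob_compl_eq_zero_iff (hB1.union hB2)]
    exact hcompl
  have hmul := hind.measure_inter_preimage_eq_mul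
  constructor
  · have hdec := measure_eq_add_inter (ν := ν)
      (hZm (measurableSet_singleton (1:ℝ))) hB2 pm_disjoint hcompl
    rw [hdec, preimage_mul_inter_one, preimage_mul_inter_neg_one,
      hmul _ _ (measurableSet_singleton _) (measurableSet_singleton _),
      hmul _ _ (measurableSet_singleton _) (measurableSet_singleton _), hε.1,
      show ((-(1:ℝ) : ℝ)) = (-1 : ℝ) from rfl, hε.2, ← mul_add, hsum, mul_one]
  · have hdec := measure_eq_add_inter (ν := ν)
      (hZm (measurableSet_singleton (-1:ℝ))) hB2 pm_disjoint hcompl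
    rw [hdec, preimage_mul_inter_one, preimage_mul_inter_neg_one,
      hmul _ _ (measurableSet_singleton _) (measurableSet_singleton _),
      hmul _ _ (measurableSet_singleton _) (measurableSet_singleton _), hε.2,
      show ((-(-1:ℝ) : ℝ)) = (1 : ℝ) by norm_num, hε.1, ← mul_add, hsum, mul_one]

/-- If `ε` is symmetric Bernoulli and independent of the pair `(W, S)` with `S` a ±1 variable,
then `W` is independent of `ε * S`. -/
lemma indepFun_mul_fresh [IsProbabilityMeasure ν] {ε W S : Ω → ℝ}
    (hεm : Measurable ε) (hWm : Measurable W) (hSm : Measurable S)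
    (hε : IsSymmBernoulli ν ε) (hS : ∀ᵐ ω ∂ν, S ω = 1 ∨ S ω = -1)
    (hind : IndepFun ε (fun ω => (W ω, S ω)) ν) :
    IndepFun W (fun ω => ε ω * S ω) ν := by
  classical
  have hεcompl : ν ((ε ⁻¹' {1} ∪ ε ⁻¹' {-1})ᶜ) = 0 :=
    compl_null_of_ae_pm_one (hε.ae_pm_one hεm)
  have hScompl : ν ((S ⁻¹' {1} ∪ S ⁻¹' {-1})ᶜ) = 0 := compl_null_of_ae_pm_one hS
  have hZm : Measurable fun ω => ε ω * S ω := hεm.mul hSm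
  have hmul := hind.measure_inter_preimage_eq_mul
  rw [indepFun_iff_measure_inter_preimage_eq_mul]
  intro s t hs ht
  set t1 : Set ℝ := (fun x : ℝ => 1 * x) ⁻¹' t with ht1def
  set t2 : Set ℝ := (fun x : ℝ => (-1) * x) ⁻¹' t with ht2def
  have ht1 : MeasurableSet t1 := (measurable_id.const_mul (1:ℝ)) ht
  have ht2 : MeasurableSet t2 := (measurable_id.const_mul (-1:ℝ)) ht
  -- master computation
  have master : ∀ s : Set ℝ, MeasurableSet s →
      ν (W ⁻¹' s ∩ (fun ω => ε ω * S ω) ⁻¹' t)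
        = 1/2 * (ν (W ⁻¹' s ∩ S ⁻¹' t1) + ν (W ⁻¹' s ∩ S ⁻¹' t2)) := by
    intro s hs
    have hE : MeasurableSet (W ⁻¹' s ∩ (fun ω => ε ω * S ω) ⁻¹' t) :=
      (hWm hs).inter (hZm ht)
    have hdec := measure_eq_add_inter (ν := ν) hE
      (hεm (measurableSet_singleton (-1:ℝ))) pm_disjoint hεcompl
    have e1 : W ⁻¹' s ∩ (fun ω => ε ω * S ω) ⁻¹' t ∩ ε ⁻¹' {1}
        = ε ⁻¹' {1} ∩ (fun ω => (W ω, S ω)) ⁻¹' (s ×ˢ t1) := by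
      ext ω
      simp only [Set.mem_inter_iff, Set.mem_preimage, Set.mem_singleton_iff, Set.mem_prod,
        ht1def]
      constructor
      · rintro ⟨⟨h1, h2⟩, h3⟩
        rw [h3, one_mul] at h2
        exact ⟨h3, h1, by rw [one_mul]; exact h2⟩
      · rintro ⟨h3, h1, h2⟩
        rw [one_mul] at h2
        exact ⟨⟨h1, by rw [h3, one_mul]; exact h2⟩, h3⟩
    have e2 : W ⁻¹' s ∩ (fun ω => ε ω * S ω) ⁻¹' t ∩ ε ⁻¹' {-1}
        = ε ⁻¹' {-1} ∩ (fun ω => (W ω, S ω)) ⁻¹' (s ×ˢ t2) := by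
      ext ω
      simp only [Set.mem_inter_iff, Set.mem_preimage, Set.mem_singleton_iff, Set.mem_prod,
        ht2def]
      constructor
      · rintro ⟨⟨h1, h2⟩, h3⟩
        rw [h3] at h2
        exact ⟨h3, h1, h2⟩
      · rintro ⟨h3, h1, h2⟩
        exact ⟨⟨h1, by rw [h3]; exact h2⟩, h3⟩
    have p1 : (fun ω => (W ω, S ω)) ⁻¹' (s ×ˢ t1) = W ⁻¹' s ∩ S ⁻¹' t1 :=
      Set.mk_preimage_prod W S
    have p2 : (fun ω => (W ω, S ω)) ⁻¹' (s ×ˢ t2) = W ⁻¹' s ∩ S ⁻¹' t2 :=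
      Set.mk_preimage_prod W S
    rw [hdec, e1, e2, hmul _ _ (measurableSet_singleton _) (hs.prod ht1),
      hmul _ _ (measurableSet_singleton _) (hs.prod ht2), hε.1, hε.2, p1, p2, mul_add]
  -- counting lemma
  have hsub : ∀ (s : Set Ω) (u : Set ℝ) (x : ℝ), MeasurableSet u →
      s ∩ S ⁻¹' u ∩ S ⁻¹' {x} = if x ∈ u then s ∩ S ⁻¹' {x} else ∅ := by
    intro s u x _
    split_ifs with hx
    · ext ω
      simp only [Set.mem_inter_iff, Set.mem_preimage, Set.mem_singleton_iff]
      constructor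
      · rintro ⟨⟨h1, _⟩, h3⟩; exact ⟨h1, h3⟩
      · rintro ⟨h1, h3⟩; exact ⟨⟨h1, by rw [h3]; exact hx⟩, h3⟩
    · ext ω
      simp only [Set.mem_inter_iff, Set.mem_preimage, Set.mem_singleton_iff, Set.mem_empty_iff_false,
        iff_false, not_and]
      rintro ⟨_, h2⟩ h3
      rw [h3] at h2
      exact hx h2
  set κ : ENNReal := (if (1:ℝ) ∈ t then 1 else 0) + (if (-1:ℝ) ∈ t then 1 else 0) with hκdef
  have hdecS : ∀ (E : Set Ω), MeasurableSet E → ν E = ν (E ∩ S ⁻¹' {1}) + ν (E ∩ S ⁻¹' {-1}) :=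
    fun E hE => measure_eq_add_inter hE (hSm (measurableSet_singleton _)) pm_disjoint hScompl
  have hmem1 : ((1:ℝ) ∈ t1 ↔ (1:ℝ) ∈ t) ∧ ((-1:ℝ) ∈ t1 ↔ (-1:ℝ) ∈ t)
      ∧ ((1:ℝ) ∈ t2 ↔ (-1:ℝ) ∈ t) ∧ ((-1:ℝ) ∈ t2 ↔ (1:ℝ) ∈ t) := by
    refine ⟨?_, ?_, ?_, ?_⟩ <;> simp [ht1def, ht2def] <;> norm_num
  have hcount : ∀ s : Set ℝ, MeasurableSet s →
      ν (W ⁻¹' s ∩ S ⁻¹' t1) + ν (W ⁻¹' s ∩ S ⁻¹' t2) = κ * ν (W ⁻¹' s) := by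
    intro s hs
    have hA1 := hdecS (W ⁻¹' s ∩ S ⁻¹' t1) ((hWm hs).inter (hSm ht1))
    have hA2 := hdecS (W ⁻¹' s ∩ S ⁻¹' t2) ((hWm hs).inter (hSm ht2))
    have hA := hdecS (W ⁻¹' s) (hWm hs)
    rw [hA1, hA2, hsub _ _ _ ht1, hsub _ _ _ ht1, hsub _ _ _ ht2, hsub _ _ _ ht2, hA, hκdef]
    rcases hmem1 with ⟨m1, m2, m3, m4⟩
    by_cases h1 : (1:ℝ) ∈ t <;> by_cases h2 : (-1:ℝ) ∈ t <;>
      simp only [m1, m2, m3, m4, h1, h2, if_true, if_false, measure_empty] <;> ring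
  have huniv := hcount Set.univ MeasurableSet.univ
  have hZt := master Set.univ MeasurableSet.univ
  simp only [Set.preimage_univ, Set.univ_inter, measure_univ, mul_one] at huniv hZt
  rw [huniv] at hZt
  rw [master s hs, hcount s hs, hZt]
  ring

variable {ι : Type*} [DecidableEq ι] {f : ι → Ω → ℝ}

lemma measurable_finset_prod (hmeas : ∀ t, Measurable (f t)) (s : Finset ι) :
    Measurable fun ω => ∏ t ∈ s, f t ω :=
  Finset.measurable_prod s fun t _ => hmeas t

lemma isSymmBernoulli_finset_prod [IsProbabilityMeasure ν]
    (hind : iIndepFun f ν) (hmeas : ∀ t, Measurable (f t))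
    (hbern : ∀ t, IsSymmBernoulli ν (f t)) (s : Finset ι) (hs : s.Nonempty) :
    IsSymmBernoulli ν (fun ω => ∏ t ∈ s, f t ω) := by
  induction hs using Finset.Nonempty.cons_induction with
  | singleton a => simpa using hbern a
  | cons a s ha hs ih =>
    have hprodeq : (∏ j ∈ s, f j) = fun ω => ∏ j ∈ s, f j ω := by
      funext ω; exact Finset.prod_apply ω s f
    have hindep2 : IndepFun (f a) (fun ω => ∏ j ∈ s, f j ω) ν := by
      have h := (hind.indepFun_finsetProd_of_notMem hmeas ha).symm
      rwa [hprodeq] at h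
    have hres := isSymmBernoulli_mul (hmeas a) (measurable_finset_prod hmeas s)
      (hbern a) (ih.ae_pm_one (measurable_finset_prod hmeas s)) hindep2
    have : (fun ω => ∏ t ∈ Finset.cons a s ha, f t ω)
        = fun ω => f a ω * ∏ t ∈ s, f t ω := by
      funext ω; rw [Finset.prod_cons]
    rwa [this]

lemma ae_pm_one_const_prod [IsProbabilityMeasure ν]
    (hmeas : ∀ t, Measurable (f t)) (hbern : ∀ t, IsSymmBernoulli ν (f t))
    (c : ℝ) (hc : c = 1 ∨ c = -1) (s : Finset ι) :
    ∀ᵐ ω ∂ν, c * ∏ t ∈ s, f t ω = 1 ∨ c * ∏ t ∈ s, f t ω = -1 := by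
  have h : ∀ᵐ ω ∂ν, ∀ t ∈ s, f t ω = 1 ∨ f t ω = -1 := by
    rw [Filter.eventually_all_finset]
    intro t _
    exact (hbern t).ae_pm_one (hmeas t)
  filter_upwards [h] with ω hω
  have hprod : (∏ t ∈ s, f t ω = 1 ∨ ∏ t ∈ s, f t ω = -1) := by
    refine Finset.prod_induction _ (fun x => x = 1 ∨ x = -1) ?_ (Or.inl rfl) hω
    rintro a b (ha | ha) (hb | hb) <;> rw [ha, hb] <;> norm_num
  rcases hc with hc | hc <;> rcases hprod with h' | h' <;> rw [hc, h'] <;> norm_num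

lemma isSymmBernoulli_const_mul {Z : Ω → ℝ} (h : IsSymmBernoulli ν Z) {c : ℝ}
    (hc : c = 1 ∨ c = -1) : IsSymmBernoulli ν (fun ω => c * Z ω) := by
  rcases hc with rfl | rfl
  · simpa using h
  · constructor
    · have e : (fun ω => (-1 : ℝ) * Z ω) ⁻¹' {1} = Z ⁻¹' {-1} := by
        ext ω
        simp only [Set.mem_preimage, Set.mem_singleton_iff]
        constructor <;> intro h' <;> linarith
      rw [e]; exact h.2
    · have e : (fun ω => (-1 : ℝ) * Z ω) ⁻¹' {-1} = Z ⁻¹' {1} := by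
        ext ω
        simp only [Set.mem_preimage, Set.mem_singleton_iff]
        constructor <;> intro h' <;> linarith
      rw [e]; exact h.1

/-- Main combinatorial independence lemma: if a fresh index `τ` occurs in `sP'` and not in
`sP`, then the scaled products over `sP` and `sP'` are independent. -/
lemma indep_scaled_prods [IsProbabilityMeasure ν]
    (hind : iIndepFun f ν) (hmeas : ∀ t, Measurable (f t))
    (hbern : ∀ t, IsSymmBernoulli ν (f t))
    {sP sP' : Finset ι} (c c' : ℝ) (hc' : c' = 1 ∨ c' = -1)
    {τ : ι} (hτ' : τ ∈ sP') (hτ : τ ∉ sP) :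
    IndepFun (fun ω => c * ∏ t ∈ sP, f t ω) (fun ω => c' * ∏ t ∈ sP', f t ω) ν := by
  classical
  set u : Finset ι := sP ∪ sP'.erase τ with hu
  set W : Ω → ℝ := fun ω => c * ∏ t ∈ sP, f t ω with hW
  set S : Ω → ℝ := fun ω => c' * ∏ t ∈ sP'.erase τ, f t ω with hS
  have hτu : τ ∉ u := by simp [hu, hτ]
  have hdisj : Disjoint ({τ} : Finset ι) u := by
    simp [Finset.disjoint_left, hτu]
  have base := hind.indepFun_finset {τ} u hdisj hmeas
  have h1 : ∀ t ∈ sP, t ∈ u := fun t ht => Finset.mem_union_left _ ht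
  have h2 : ∀ t ∈ sP'.erase τ, t ∈ u := fun t ht => Finset.mem_union_right _ ht
  have hφ : Measurable (fun x : ({τ} : Finset ι) → ℝ =>
      x ⟨τ, Finset.mem_singleton_self τ⟩) := measurable_pi_apply _
  have hψ : Measurable (fun x : {y : ι // y ∈ u} → ℝ =>
      (c * ∏ t ∈ sP.attach, x ⟨t.1, h1 t.1 t.2⟩,
       c' * ∏ t ∈ (sP'.erase τ).attach, x ⟨t.1, h2 t.1 t.2⟩)) := by
    apply Measurable.prodMk <;>
      exact measurable_const.mul (Finset.measurable_prod _ fun t _ => measurable_pi_apply _)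
  have hpair := base.comp hφ hψ
  have e1 : ((fun x : ({τ} : Finset ι) → ℝ => x ⟨τ, Finset.mem_singleton_self τ⟩) ∘
      (fun a (i : ({τ} : Finset ι)) => f i a)) = f τ := rfl
  have e2 : ((fun x : {y : ι // y ∈ u} → ℝ =>
      (c * ∏ t ∈ sP.attach, x ⟨t.1, h1 t.1 t.2⟩,
       c' * ∏ t ∈ (sP'.erase τ).attach, x ⟨t.1, h2 t.1 t.2⟩)) ∘
      (fun a (i : {y : ι // y ∈ u}) => f i a)) = fun ω => (W ω, S ω) := by
    funext ω
    simp only [Function.comp_apply, hW, hS]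
    rw [Finset.prod_attach sP (fun t => f t ω),
      Finset.prod_attach (sP'.erase τ) (fun t => f t ω)]
  rw [e1, e2] at hpair
  have hWm : Measurable W := measurable_const.mul (measurable_finset_prod hmeas sP)
  have hSm : Measurable S := measurable_const.mul (measurable_finset_prod hmeas _)
  have hae : ∀ᵐ ω ∂ν, S ω = 1 ∨ S ω = -1 :=
    ae_pm_one_const_prod hmeas hbern c' hc' _
  have hfin := indepFun_mul_fresh (hmeas τ) hWm hSm (hbern τ) hae hpair
  have e3 : (fun ω => f τ ω * S ω) = fun ω => c' * ∏ t ∈ sP', f t ω := by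
    funext ω
    simp only [hS]
    rw [mul_left_comm]
    congr 1
    exact Finset.mul_prod_erase sP' (fun t => f t ω) hτ'
  rwa [e3] at hfin

end Aux

/-- In the dependent design, for distinct blocks `k ≠ ℓ` and `k' ≠ ℓ'`, the pair of
products `(U_{i,(k,a)}U_{i,(ℓ,b)}, U_{j,(k',a')}U_{j,(ℓ',b')})` behaves as under
independent sampling: the two components are equal (a.s.) when
`(i=j, a=a', b=b', k=k', ℓ=ℓ')` or `(i=j, a=b', b=a', k=ℓ', ℓ=k')`, and otherwise
they are independent symmetric Bernoulli random variables. -/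
theorem dependent_design_product_distribution {Ω : Type*} [MeasurableSpace Ω]
    (ν : Measure Ω) [IsProbabilityMeasure ν] {m N : ℕ}
    (X : Ω → Fin m → Fin N → ℝ) (Y : Ω → Fin N → Fin m → ℝ)
    (hXmeas : ∀ k a, Measurable fun ω => X ω k a)
    (hYmeas : ∀ j k, Measurable fun ω => Y ω j k)
    (hindep : iIndepFun
      (fun (s : (Fin m × Fin N) ⊕ (Fin N × Fin m)) => Sum.elim (fun q (ω : Ω) => X ω q.1 q.2) (fun q (ω : Ω) => Y ω q.1 q.2) s) ν)
    (hXbern : ∀ k a, IsSymmBernoulli ν fun ω => X ω k a)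
    (hYbern : ∀ j k, IsSymmBernoulli ν fun ω => Y ω j k)
    (β : Fin N → Fin N → ℝ) (hβ : ∀ j a, β j a = 1 ∨ β j a = -1)
    (hβorth : (N : ℝ)⁻¹ • ∑ j, Matrix.vecMulVec (β j) (β j) = 1)
    (i j a b a' b' : Fin N) (k ℓ k' ℓ' : Fin m) (hkl : k ≠ ℓ) (hkl' : k' ≠ ℓ')
    (P P' : Ω → ℝ)
    (hP : ∀ ω, P ω = (β i a * Y ω i k * X ω k a) * (β i b * Y ω i ℓ * X ω ℓ b))
    (hP' : ∀ ω, P' ω = (β j a' * Y ω j k' * X ω k' a') * (β j b' * Y ω j ℓ' * X ω ℓ' b')) :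
    (((i = j ∧ a = a' ∧ b = b' ∧ k = k' ∧ ℓ = ℓ')
        ∨ (i = j ∧ a = b' ∧ b = a' ∧ k = ℓ' ∧ ℓ = k')) → P =ᵐ[ν] P')
    ∧ (¬ ((i = j ∧ a = a' ∧ b = b' ∧ k = k' ∧ ℓ = ℓ')
        ∨ (i = j ∧ a = b' ∧ b = a' ∧ k = ℓ' ∧ ℓ = k')) →
        IndepFun P P' ν ∧ IsSymmBernoulli ν P ∧ IsSymmBernoulli ν P') := by
  classical
  constructor
  · rintro (⟨rfl, rfl, rfl, rfl, rfl⟩ | ⟨rfl, rfl, rfl, rfl, rfl⟩) <;>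
    · apply Filter.Eventually.of_forall
      intro ω
      simp only [hP ω, hP' ω]
      try ring
  · intro hne
    set f : (Fin m × Fin N) ⊕ (Fin N × Fin m) → Ω → ℝ :=
      fun s => Sum.elim (fun q (ω : Ω) => X ω q.1 q.2) (fun q (ω : Ω) => Y ω q.1 q.2) s with hf
    have hfmeas : ∀ t, Measurable (f t) := by
      rintro (⟨k₀, a₀⟩ | ⟨j₀, k₀⟩)
      · exact hXmeas _ _
      · exact hYmeas _ _
    have hfbern : ∀ t, IsSymmBernoulli ν (f t) := by
      rintro (⟨k₀, a₀⟩ | ⟨j₀, k₀⟩)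
      · exact hXbern _ _
      · exact hYbern _ _
    have hindep' : iIndepFun f ν := hindep
    set sP : Finset ((Fin m × Fin N) ⊕ (Fin N × Fin m)) := {Sum.inl (k, a), Sum.inl (ℓ, b), Sum.inr (i, k), Sum.inr (i, ℓ)}
      with hsP
    set sP' : Finset ((Fin m × Fin N) ⊕ (Fin N × Fin m)) := {Sum.inl (k', a'), Sum.inl (ℓ', b'), Sum.inr (j, k'), Sum.inr (j, ℓ')}
      with hsP'
    set c : ℝ := β i a * β i b with hcdef
    set c' : ℝ := β j a' * β j b' with hc'def
    have hc : c = 1 ∨ c = -1 := by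
      rcases hβ i a with h1 | h1 <;> rcases hβ i b with h2 | h2 <;>
        rw [hcdef, h1, h2] <;> norm_num
    have hc' : c' = 1 ∨ c' = -1 := by
      rcases hβ j a' with h1 | h1 <;> rcases hβ j b' with h2 | h2 <;>
        rw [hc'def, h1, h2] <;> norm_num
    have hprodP : ∀ ω, (∏ t ∈ sP, f t ω)
        = X ω k a * (X ω ℓ b * (Y ω i k * Y ω i ℓ)) := by
      intro ω
      rw [hsP]
      rw [Finset.prod_insert (by simp [hkl, Prod.ext_iff]),
        Finset.prod_insert (by simp), Finset.prod_insert (by simp [hkl, Prod.ext_iff]),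
        Finset.prod_singleton]
      simp [hf]
    have hprodP' : ∀ ω, (∏ t ∈ sP', f t ω)
        = X ω k' a' * (X ω ℓ' b' * (Y ω j k' * Y ω j ℓ')) := by
      intro ω
      rw [hsP']
      rw [Finset.prod_insert (by simp [hkl', Prod.ext_iff]),
        Finset.prod_insert (by simp), Finset.prod_insert (by simp [hkl', Prod.ext_iff]),
        Finset.prod_singleton]
      simp [hf]
    have hPeq : P = fun ω => c * ∏ t ∈ sP, f t ω := by
      funext ω
      rw [hP, hprodP ω, hcdef]
      ring
    have hP'eq : P' = fun ω => c' * ∏ t ∈ sP', f t ω := by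
      funext ω
      rw [hP', hprodP' ω, hc'def]
      ring
    obtain ⟨τ, hτ', hτ⟩ : ∃ τ : (Fin m × Fin N) ⊕ (Fin N × Fin m), τ ∈ sP' ∧ τ ∉ sP := by
      by_cases hij : i = j
      · subst hij
        by_cases h1 : (k' = k ∧ a' = a) ∨ (k' = ℓ ∧ a' = b)
        · by_cases h2 : (ℓ' = k ∧ b' = a) ∨ (ℓ' = ℓ ∧ b' = b)
          · exfalso
            apply hne
            rcases h1 with ⟨e1, e2⟩ | ⟨e1, e2⟩ <;> rcases h2 with ⟨e3, e4⟩ | ⟨e3, e4⟩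
            · exact absurd (e1.trans e3.symm) hkl'
            · exact Or.inl ⟨rfl, e2.symm, e4.symm, e1.symm, e3.symm⟩
            · exact Or.inr ⟨rfl, e4.symm, e2.symm, e3.symm, e1.symm⟩
            · exact absurd (e1.trans e3.symm) hkl'
          · refine ⟨Sum.inl (ℓ', b'), by simp [hsP'], ?_⟩
            simp only [hsP, Finset.mem_insert, Finset.mem_singleton, Sum.inl.injEq,
              Prod.mk.injEq, not_or, reduceCtorEq, not_false_eq_true, and_true]
            tauto
        · refine ⟨Sum.inl (k', a'), by simp [hsP'], ?_⟩
          simp only [hsP, Finset.mem_insert, Finset.mem_singleton, Sum.inl.injEq,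
            Prod.mk.injEq, not_or, reduceCtorEq, not_false_eq_true, and_true]
          tauto
      · have hji : j ≠ i := Ne.symm hij
        refine ⟨Sum.inr (j, k'), by simp [hsP'], ?_⟩
        simp only [hsP, Finset.mem_insert, Finset.mem_singleton, Sum.inr.injEq,
          Prod.mk.injEq, not_or, reduceCtorEq, not_false_eq_true, true_and]
        tauto
    have hind2 := indep_scaled_prods (ν := ν) hindep' hfmeas hfbern c c' hc' hτ' hτ
    refine ⟨by rw [hPeq, hP'eq]; exact hind2, ?_, ?_⟩
    · rw [hPeq]
      exact isSymmBernoulli_const_mul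
        (isSymmBernoulli_finset_prod hindep' hfmeas hfbern sP ⟨Sum.inl (k, a), by simp [hsP]⟩) hc
    · rw [hP'eq]
      exact isSymmBernoulli_const_mul
        (isSymmBernoulli_finset_prod hindep' hfmeas hfbern sP' ⟨Sum.inl (k', a'), by simp [hsP']⟩) hc'
end
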